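/- arXiv:2301.11201 — 5 statements merged into one kernel-verified Lean document; each statement's English description precedes it below -/
import Mathlib

section
/- Let x' be a feasible assignment for the LAP P'. Define x^1, x^2 : V → L by: x^1_v = x'_v if x'_v ∈ L∖{#} and x^1_v = # otherwise (i.e., if x'_v = v); x^2_v = x'⁻¹(v) if x'⁻¹(v) ∈ L∖{#} and x^2_v = # otherwise (i.e., if x'⁻¹(v) = v), where x'⁻¹ is the inverse bijection of x'. Then x^1 and x^2 are feasible assignments for the ILAP P, and 2·Σ_{w∈V'} θ'_w(x'_w) = Σ_{v∈V} θ_v(x^1_v) + Σ_{v∈V} θ_v(x^2_v). -/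
open Finset

/-! Incomplete LAP (ILAP): labels are `Option K`, the dummy label `#` is `none`.
The reduced complete LAP instance `P'` lives on `V ⊕ K` (both partitions equal
`V ∪ (L ∖ {#})`). -/

section IlapDefs

variable {V K : Type*} [Fintype V] [Fintype K] [DecidableEq V] [DecidableEq K]

/-- Feasibility for the ILAP: allowed labels, and each non-dummy label used at most once. -/
def IlapFeasible (Lab : V → Finset (Option K)) (x : V → Option K) : Prop :=
  (∀ v, x v ∈ Lab v) ∧ ∀ u v k, x u = some k → x v = some k → u = v

/-- Cost of an ILAP assignment. -/
def ilapCost (θ : V → Option K → ℝ) (x : V → Option K) : ℝ := ∑ v, θ v (x v)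

/-- Allowed labels of the reduced LAP instance `P'` on `V ⊕ K`:
`L'_v = (L_v ∖ {#}) ∪ {v}` and `L'_ℓ = V_ℓ ∪ {ℓ}`. -/
def redLab (Lab : V → Finset (Option K)) : V ⊕ K → Finset (V ⊕ K)
  | Sum.inl v => insert (Sum.inl v) ((univ.filter fun k => some k ∈ Lab v).image Sum.inr)
  | Sum.inr k => insert (Sum.inr k) ((univ.filter fun v => some k ∈ Lab v).image Sum.inl)

/-- Costs of the reduced LAP instance `P'`: halved original costs between `V` and `L ∖ {#}`,
`θ_v(#)` on the vertex diagonal and `0` on the label diagonal. -/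
noncomputable def redCost (θ : V → Option K → ℝ) : V ⊕ K → V ⊕ K → ℝ
  | Sum.inl v, Sum.inr k => θ v (some k) / 2
  | Sum.inr k, Sum.inl v => θ v (some k) / 2
  | Sum.inl v, Sum.inl _ => θ v none
  | Sum.inr _, Sum.inr _ => 0

/-- Feasibility for the primal LP formulation of the ILAP. -/
def IlapPrimalFeasible (Lab : V → Finset (Option K)) (μ : V → Option K → ℝ) : Prop :=
  (∀ v ℓ, ℓ ∈ Lab v → 0 ≤ μ v ℓ) ∧
  (∀ v ℓ, ℓ ∉ Lab v → μ v ℓ = 0) ∧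
  (∀ v, ∑ ℓ ∈ Lab v, μ v ℓ = 1) ∧
  (∀ k : K, ∑ v ∈ univ.filter (fun v => some k ∈ Lab v), μ v (some k) ≤ 1)

/-- Objective of the primal LP formulation of the ILAP. -/
def ilapPrimalObj (θ : V → Option K → ℝ) (Lab : V → Finset (Option K))
    (μ : V → Option K → ℝ) : ℝ :=
  ∑ v, ∑ ℓ ∈ Lab v, θ v ℓ * μ v ℓ

/-- The set of optimal solutions of the primal LP formulation of the ILAP. -/
def IlapPrimalOpt (θ : V → Option K → ℝ) (Lab : V → Finset (Option K)) :
    Set (V → Option K → ℝ) :=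
  {μ | IlapPrimalFeasible Lab μ ∧
    ∀ ν, IlapPrimalFeasible Lab ν → ilapPrimalObj θ Lab μ ≤ ilapPrimalObj θ Lab ν}

/-- Feasibility for the dual LP formulation of the ILAP: `β ≤ 0` and
`α_v + [ℓ ≠ #]·β_ℓ ≤ θ_v(ℓ)` on allowed pairs. -/
def IlapDualFeasible (θ : V → Option K → ℝ) (Lab : V → Finset (Option K))
    (p : (V → ℝ) × (K → ℝ)) : Prop :=
  (∀ k, p.2 k ≤ 0) ∧
  ∀ v ℓ, ℓ ∈ Lab v →
    p.1 v + (match ℓ with | some k => p.2 k | none => 0) ≤ θ v ℓ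

/-- Objective of the dual LP formulation of the ILAP. -/
def ilapDualObj (p : (V → ℝ) × (K → ℝ)) : ℝ := ∑ v, p.1 v + ∑ k, p.2 k

/-- The set of optimal solutions of the dual LP formulation of the ILAP. -/
def IlapDualOpt (θ : V → Option K → ℝ) (Lab : V → Finset (Option K)) :
    Set ((V → ℝ) × (K → ℝ)) :=
  {p | IlapDualFeasible θ Lab p ∧
    ∀ q, IlapDualFeasible θ Lab q → ilapDualObj q ≤ ilapDualObj p}

end IlapDefs

section LAPDefs

variable {V L : Type*} [Fintype V] [Fintype L] [DecidableEq V] [DecidableEq L]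

/-- Feasibility for the primal LP of a (complete) LAP. -/
def PrimalFeasible (Lab : V → Finset L) (μ : V → L → ℝ) : Prop :=
  (∀ v ℓ, ℓ ∈ Lab v → 0 ≤ μ v ℓ) ∧
  (∀ v ℓ, ℓ ∉ Lab v → μ v ℓ = 0) ∧
  (∀ v, ∑ ℓ ∈ Lab v, μ v ℓ = 1) ∧
  (∀ ℓ : L, ∑ v ∈ univ.filter (fun v => ℓ ∈ Lab v), μ v ℓ = 1)

/-- Objective of the primal LP of a (complete) LAP. -/
def primalObj (θ : V → L → ℝ) (Lab : V → Finset L) (μ : V → L → ℝ) : ℝ :=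
  ∑ v, ∑ ℓ ∈ Lab v, θ v ℓ * μ v ℓ

/-- The set of optimal solutions of the primal LP of a (complete) LAP. -/
def PrimalOpt (θ : V → L → ℝ) (Lab : V → Finset L) : Set (V → L → ℝ) :=
  {μ | PrimalFeasible Lab μ ∧
    ∀ ν, PrimalFeasible Lab ν → primalObj θ Lab μ ≤ primalObj θ Lab ν}

/-- Feasibility for the dual LP of a (complete) LAP. -/
def DualFeasible (θ : V → L → ℝ) (Lab : V → Finset L) (p : (V → ℝ) × (L → ℝ)) : Prop :=
  ∀ v ℓ, ℓ ∈ Lab v → p.1 v + p.2 ℓ ≤ θ v ℓ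

/-- Objective of the dual LP of a (complete) LAP. -/
def dualObj (p : (V → ℝ) × (L → ℝ)) : ℝ := ∑ v, p.1 v + ∑ ℓ, p.2 ℓ

/-- The set of optimal solutions of the dual LP of a (complete) LAP. -/
def DualOpt (θ : V → L → ℝ) (Lab : V → Finset L) : Set ((V → ℝ) × (L → ℝ)) :=
  {p | DualFeasible θ Lab p ∧ ∀ q, DualFeasible θ Lab q → dualObj q ≤ dualObj p}

end LAPDefs

/-!
Let `g(v, y) = θ_v(y)` for `v ∈ V` (with `y ∈ V` read as `#`) and `g(ℓ, y) = 0` for labels `ℓ`;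
this is `vertexCost`. Since `θ'_v(ℓ) = θ'_ℓ(v) = θ_v(ℓ)/2`, `θ'_v(v) = θ_v(#)` and `θ'_ℓ(ℓ) = 0`,
every allowed pair satisfies `2 θ'_w(y) = g(w, y) + g(y, w)`. Summing along `x'`, the terms
`g(w, x'_w)` give the cost of `x¹`, and after reindexing by `x'` the terms `g(x'_w, w)` give the
cost of `x²`. Feasibility of `x¹`, `x²` comes from injectivity of `x'` and `x'⁻¹` and the shape of
the allowed label sets `L'`.
-/

open Function

theorem Sum.elim_none_some_apply {α β : Type*} (y : α ⊕ β) :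
    Sum.elim (fun _ => (none : Option β)) some y = y.getRight? := by
  cases y <;> rfl

theorem Equiv.sum_apply_apply_symm {α M : Type*} [Fintype α] [AddCommMonoid M]
    (σ : α ≃ α) (g : α → α → M) : ∑ w, g (σ w) w = ∑ w, g w (σ.symm w) := by
  simpa using σ.sum_comp fun w => g w (σ.symm w)

section Reduction

variable {V K : Type*}

theorem IlapFeasible.of_injective {Lab : V → Finset (Option K)} {f : V → V ⊕ K}
    (hf : Injective f) (hLab : ∀ v, (f v).getRight? ∈ Lab v) :
    IlapFeasible Lab fun v => (f v).getRight? := by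
  refine ⟨hLab, fun u v k hu hv => hf ?_⟩
  rw [Sum.getRight?_eq_some_iff] at hu hv
  rw [hu, hv]

def vertexCost (θ : V → Option K → ℝ) : V ⊕ K → V ⊕ K → ℝ
  | .inl v, y => θ v y.getRight?
  | .inr _, _ => 0

theorem sum_vertexCost [Fintype V] [Fintype K] (θ : V → Option K → ℝ) (f : V ⊕ K → V ⊕ K) :
    ∑ w, vertexCost θ w (f w) = ilapCost θ fun v => (f (.inl v)).getRight? := by
  simp [Fintype.sum_sum_type, vertexCost, ilapCost]

variable [Fintype V] [Fintype K] [DecidableEq V] [DecidableEq K]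

theorem mem_redLab_inl {Lab : V → Finset (Option K)} {v : V} {y : V ⊕ K} :
    y ∈ redLab Lab (.inl v) ↔ y = .inl v ∨ ∃ k, y = .inr k ∧ some k ∈ Lab v := by
  simp only [redLab, mem_insert, mem_image, mem_filter, mem_univ, true_and]
  grind

theorem mem_redLab_inr {Lab : V → Finset (Option K)} {k : K} {y : V ⊕ K} :
    y ∈ redLab Lab (.inr k) ↔ y = .inr k ∨ ∃ v, y = .inl v ∧ some k ∈ Lab v := by
  simp only [redLab, mem_insert, mem_image, mem_filter, mem_univ, true_and]
  grind

theorem getRight?_mem_of_mem_redLab_inl {Lab : V → Finset (Option K)} {v : V} {y : V ⊕ K}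
    (hdum : none ∈ Lab v) (hy : y ∈ redLab Lab (.inl v)) : y.getRight? ∈ Lab v := by
  obtain rfl | ⟨k, rfl, hk⟩ := mem_redLab_inl.mp hy
  exacts [hdum, hk]

theorem getRight?_mem_of_inl_mem_redLab {Lab : V → Finset (Option K)} {v : V} {y : V ⊕ K}
    (hdum : none ∈ Lab v) (hy : .inl v ∈ redLab Lab y) : y.getRight? ∈ Lab v := by
  cases y with
  | inl u =>
    obtain h | ⟨k, h, -⟩ := mem_redLab_inl.mp hy <;> simp_all
  | inr k =>
    obtain h | ⟨u, h, hk⟩ := mem_redLab_inr.mp hy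
    · simp at h
    · simpa [Sum.inl_injective h] using hk

theorem two_mul_redCost {Lab : V → Finset (Option K)} (θ : V → Option K → ℝ) {w y : V ⊕ K}
    (hy : y ∈ redLab Lab w) : 2 * redCost θ w y = vertexCost θ w y + vertexCost θ y w := by
  cases w with
  | inl v =>
    obtain rfl | ⟨k, rfl, -⟩ := mem_redLab_inl.mp hy <;>
      simp only [redCost, vertexCost, Sum.getRight?_inl, Sum.getRight?_inr] <;> ring
  | inr k =>
    obtain rfl | ⟨v, rfl, -⟩ := mem_redLab_inr.mp hy <;>
      simp only [redCost, vertexCost, Sum.getRight?_inr] <;> ring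

end Reduction

/-- Proposition 2: a feasible assignment `x'` of the reduced LAP `P'` decomposes into two
feasible ILAP assignments `x¹`, `x²` with `2·Θ' = Θ₁ + Θ₂`. -/
theorem statement10 {V K : Type*} [Fintype V] [Fintype K] [DecidableEq V] [DecidableEq K]
    (Lab : V → Finset (Option K)) (hdum : ∀ v, (none : Option K) ∈ Lab v)
    (θ : V → Option K → ℝ)
    (x' : (V ⊕ K) ≃ (V ⊕ K)) (hx' : ∀ w, x' w ∈ redLab Lab w)
    (x1 x2 : V → Option K)
    (hx1 : x1 = fun v => Sum.elim (fun _ => (none : Option K)) some (x' (Sum.inl v)))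
    (hx2 : x2 = fun v => Sum.elim (fun _ => (none : Option K)) some (x'.symm (Sum.inl v))) :
    IlapFeasible Lab x1 ∧ IlapFeasible Lab x2 ∧
      2 * (∑ w : V ⊕ K, redCost θ w (x' w)) = ilapCost θ x1 + ilapCost θ x2 := by
  simp only [Sum.elim_none_some_apply] at hx1 hx2
  subst hx1 hx2
  refine ⟨.of_injective (x'.injective.comp Sum.inl_injective) fun v =>
      getRight?_mem_of_mem_redLab_inl (hdum v) (hx' _),
    .of_injective (x'.symm.injective.comp Sum.inl_injective) fun v =>
      getRight?_mem_of_inl_mem_redLab (hdum v) (by simpa using hx' (x'.symm (.inl v))), ?_⟩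
  calc 2 * ∑ w, redCost θ w (x' w)
      = ∑ w, (vertexCost θ w (x' w) + vertexCost θ (x' w) w) := by
        rw [mul_sum]; exact sum_congr rfl fun w _ => two_mul_redCost θ (hx' w)
    _ = ∑ w, vertexCost θ w (x' w) + ∑ w, vertexCost θ w (x'.symm w) := by
        rw [sum_add_distrib, x'.sum_apply_apply_symm]
    _ = _ := by rw [sum_vertexCost, sum_vertexCost]
end

section
/- Let μ' lie in the relative interior of the set of optimal solutions of the primal LP of the LAP P'. Then for all v ∈ V and ℓ ∈ L_v∖{#}: μ'_v(ℓ) > 0 if and only if μ'_ℓ(v) > 0. -/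
open Finset

/-! An optimal solution `μ` of the reduced LAP can be transposed: since both the allowed
pairs and the costs of `P'` are symmetric, `μᵀ` is optimal as well. If `μ` lies in the
relative interior of the optimal face, the segment from `μᵀ` through `μ` can be extended
slightly beyond `μ` inside the face, and nonnegativity of the extended point at the entries
`(v, ℓ)` and `(ℓ, v)` forces `μ_v(ℓ)` and `μ_ℓ(v)` to vanish together. -/

theorem exists_one_lt_lineMap_mem_of_mem_intrinsicInterior {E : Type*} [AddCommGroup E]
    [Module ℝ E] [TopologicalSpace E] [IsTopologicalAddGroup E] [ContinuousSMul ℝ E]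
    {S : Set E} {x y : E} (hx : x ∈ intrinsicInterior ℝ S) (hy : y ∈ S) :
    ∃ t : ℝ, 1 < t ∧ AffineMap.lineMap y x t ∈ S := by
  obtain ⟨x₀, hx₀, rfl⟩ := mem_intrinsicInterior.1 hx
  let c : ℝ → affineSpan ℝ S := fun t =>
    ⟨AffineMap.lineMap y (x₀ : E) t,
      AffineMap.lineMap_mem t (subset_affineSpan ℝ S hy) x₀.2⟩
  have hc : Continuous c := AffineMap.lineMap_continuous.subtype_mk _
  have hc₁ : c 1 = x₀ := Subtype.ext (AffineMap.lineMap_apply_one _ _)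
  have hnear : ∀ᶠ t in nhds (1 : ℝ), c t ∈ ((↑) ⁻¹' S : Set (affineSpan ℝ S)) :=
    (hc.tendsto' 1 x₀ hc₁).eventually (mem_interior_iff_mem_nhds.1 hx₀)
  obtain ⟨t, ht, ht₁⟩ :=
    ((hnear.filter_mono (nhdsWithin_le_nhds (s := Set.Ioi 1))).and self_mem_nhdsWithin).exists
  exact ⟨t, ht₁, ht⟩

section SymmetricLAP

variable {W : Type*} [Fintype W] {Lab : W → Finset W} {θ : W → W → ℝ}

theorem filter_mem_eq_of_symm [DecidableEq W] (hLab : ∀ w ℓ, ℓ ∈ Lab w ↔ w ∈ Lab ℓ) (ℓ : W) :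
    univ.filter (fun w => ℓ ∈ Lab w) = Lab ℓ := by
  ext w
  simp [hLab w ℓ]

theorem PrimalFeasible.swap [DecidableEq W] (hLab : ∀ w ℓ, ℓ ∈ Lab w ↔ w ∈ Lab ℓ) {μ : W → W → ℝ}
    (hμ : PrimalFeasible Lab μ) : PrimalFeasible Lab (Function.swap μ) := by
  obtain ⟨hnonneg, hzero, hrow, hcol⟩ := hμ
  refine ⟨fun w ℓ hℓ => hnonneg ℓ w ((hLab w ℓ).1 hℓ),
    fun w ℓ hℓ => hzero ℓ w fun hw => hℓ ((hLab ℓ w).1 hw), fun w => ?_, fun ℓ => ?_⟩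
  · simpa only [filter_mem_eq_of_symm hLab] using hcol w
  · simpa only [filter_mem_eq_of_symm hLab] using hrow ℓ

theorem primalObj_swap (hLab : ∀ w ℓ, ℓ ∈ Lab w ↔ w ∈ Lab ℓ)
    (hθ : ∀ w ℓ, ℓ ∈ Lab w → θ w ℓ = θ ℓ w) (μ : W → W → ℝ) :
    primalObj θ Lab (Function.swap μ) = primalObj θ Lab μ := by
  unfold primalObj
  calc ∑ w, ∑ ℓ ∈ Lab w, θ w ℓ * μ ℓ w
      = ∑ w, ∑ ℓ ∈ Lab w, θ ℓ w * μ ℓ w :=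
        sum_congr rfl fun w _ => sum_congr rfl fun ℓ hℓ => by rw [hθ w ℓ hℓ]
    _ = ∑ ℓ, ∑ w ∈ Lab ℓ, θ ℓ w * μ ℓ w := sum_comm' fun w ℓ => by simp [hLab w ℓ]

theorem swap_mem_primalOpt [DecidableEq W] (hLab : ∀ w ℓ, ℓ ∈ Lab w ↔ w ∈ Lab ℓ)
    (hθ : ∀ w ℓ, ℓ ∈ Lab w → θ w ℓ = θ ℓ w) {μ : W → W → ℝ} (hμ : μ ∈ PrimalOpt θ Lab) :
    Function.swap μ ∈ PrimalOpt θ Lab :=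
  ⟨hμ.1.swap hLab, fun ν hν => primalObj_swap hLab hθ μ ▸ hμ.2 ν hν⟩

theorem pos_iff_pos_swap_of_mem_intrinsicInterior_primalOpt [DecidableEq W]
    (hLab : ∀ w ℓ, ℓ ∈ Lab w ↔ w ∈ Lab ℓ) (hθ : ∀ w ℓ, ℓ ∈ Lab w → θ w ℓ = θ ℓ w)
    {μ : W → W → ℝ} (hμ : μ ∈ intrinsicInterior ℝ (PrimalOpt θ Lab)) {w ℓ : W}
    (hℓ : ℓ ∈ Lab w) : 0 < μ w ℓ ↔ 0 < μ ℓ w := by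
  have hopt := intrinsicInterior_subset hμ
  obtain ⟨t, ht, hext⟩ := exists_one_lt_lineMap_mem_of_mem_intrinsicInterior hμ
    (swap_mem_primalOpt hLab hθ hopt)
  have hw : w ∈ Lab ℓ := (hLab w ℓ).1 hℓ
  have h₁ := hext.1.1 w ℓ hℓ
  have h₂ := hext.1.1 ℓ w hw
  have h₃ := hopt.1.1 w ℓ hℓ
  have h₄ := hopt.1.1 ℓ w hw
  simp only [AffineMap.lineMap_apply_module', Pi.add_apply, Pi.smul_apply, Pi.sub_apply,
    Function.swap, smul_eq_mul] at h₁ h₂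
  constructor <;> intro h <;> nlinarith

end SymmetricLAP

section ReducedLAP

variable {V K : Type*} [Fintype V] [Fintype K] [DecidableEq V] [DecidableEq K]

theorem mem_redLab_comm (Lab : V → Finset (Option K)) (w ℓ : V ⊕ K) :
    ℓ ∈ redLab Lab w ↔ w ∈ redLab Lab ℓ := by
  rcases w with v | k <;> rcases ℓ with u | k' <;> simp [redLab, eq_comm]

theorem redCost_comm (θ : V → Option K → ℝ) (Lab : V → Finset (Option K)) (w ℓ : V ⊕ K)
    (h : ℓ ∈ redLab Lab w) : redCost θ w ℓ = redCost θ ℓ w := by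
  rcases w with v | k <;> rcases ℓ with u | k' <;> simp [redLab] at h <;> simp [redCost, h]

end ReducedLAP

theorem statement12_general {V K : Type*} [Fintype V] [Fintype K] [DecidableEq V] [DecidableEq K]
    (Lab : V → Finset (Option K))
    (θ : V → Option K → ℝ)
    (μ' : (V ⊕ K) → (V ⊕ K) → ℝ)
    (hμ' : μ' ∈ intrinsicInterior ℝ (PrimalOpt (redCost θ) (redLab Lab))) :
    ∀ v k, some k ∈ Lab v →
      (0 < μ' (Sum.inl v) (Sum.inr k) ↔ 0 < μ' (Sum.inr k) (Sum.inl v)) := fun v k hk =>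
  pos_iff_pos_swap_of_mem_intrinsicInterior_primalOpt (mem_redLab_comm Lab)
    (redCost_comm θ Lab) hμ' (by simp [redLab, hk])

/-- Lemma 3: if `μ'` lies in the relative interior of the primal optimal set of the
reduced LAP `P'`, then `μ'_v(ℓ) > 0 ↔ μ'_ℓ(v) > 0` for all allowed non-dummy pairs. -/
theorem statement12 {V K : Type*} [Fintype V] [Fintype K] [DecidableEq V] [DecidableEq K]
    (Lab : V → Finset (Option K)) (hdum : ∀ v, (none : Option K) ∈ Lab v)
    (θ : V → Option K → ℝ)
    (μ' : (V ⊕ K) → (V ⊕ K) → ℝ)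
    (hμ' : μ' ∈ intrinsicInterior ℝ (PrimalOpt (redCost θ) (redLab Lab))) :
    ∀ v k, some k ∈ Lab v →
      (0 < μ' (Sum.inl v) (Sum.inr k) ↔ 0 < μ' (Sum.inr k) (Sum.inl v)) :=
  statement12_general Lab θ μ' hμ'
end

section
/- Let (α', β') be feasible for the dual LP of the LAP P'. Define α_v = α'_v + β'_v for v ∈ V and β_ℓ = α'_ℓ + β'_ℓ for ℓ ∈ L∖{#}. Then (α, β) is feasible for the dual LP formulation of the ILAP P. -/
open Finset

/-! Every constraint of the ILAP dual is a sum of constraints of the dual of `P'`: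
`β_ℓ ≤ 0` is the constraint at `(ℓ, ℓ)`, `α_v ≤ θ_v(#)` the one at `(v, v)`, and
`α_v + β_ℓ ≤ θ_v(ℓ)` is the sum of those at `(v, ℓ)` and `(ℓ, v)`, whose costs `θ_v(ℓ)/2`
add up to `θ_v(ℓ)`. -/

section RedLab

variable {V K : Type*} [Fintype V] [Fintype K] [DecidableEq V] [DecidableEq K]
  {Lab : V → Finset (Option K)}

theorem inl_mem_redLab_inl_self (v : V) : (Sum.inl v : V ⊕ K) ∈ redLab Lab (Sum.inl v) :=
  Finset.mem_insert_self _ _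

theorem inr_mem_redLab_inr_self (k : K) : (Sum.inr k : V ⊕ K) ∈ redLab Lab (Sum.inr k) :=
  Finset.mem_insert_self _ _

theorem inr_mem_redLab_inl_iff {v : V} {k : K} :
    (Sum.inr k : V ⊕ K) ∈ redLab Lab (Sum.inl v) ↔ some k ∈ Lab v := by
  simp [redLab]

theorem inl_mem_redLab_inr_iff {v : V} {k : K} :
    (Sum.inl v : V ⊕ K) ∈ redLab Lab (Sum.inr k) ↔ some k ∈ Lab v := by
  simp [redLab]

end RedLab

namespace DualFeasible

variable {V K : Type*} [Fintype V] [Fintype K] [DecidableEq V] [DecidableEq K]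
  {Lab : V → Finset (Option K)} {θ : V → Option K → ℝ} {α' β' : V ⊕ K → ℝ}

theorem label_add_le_zero (hd : DualFeasible (redCost θ) (redLab Lab) (α', β')) (k : K) :
    α' (Sum.inr k) + β' (Sum.inr k) ≤ 0 :=
  hd _ _ (inr_mem_redLab_inr_self k)

theorem vertex_add_le_dummy (hd : DualFeasible (redCost θ) (redLab Lab) (α', β')) (v : V) :
    α' (Sum.inl v) + β' (Sum.inl v) ≤ θ v none :=
  hd _ _ (inl_mem_redLab_inl_self v)

theorem vertex_add_label_le (hd : DualFeasible (redCost θ) (redLab Lab) (α', β'))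
    {v : V} {k : K} (hk : some k ∈ Lab v) :
    α' (Sum.inl v) + β' (Sum.inl v) + (α' (Sum.inr k) + β' (Sum.inr k)) ≤ θ v (some k) := by
  have hvk : α' (Sum.inl v) + β' (Sum.inr k) ≤ θ v (some k) / 2 :=
    hd _ _ (inr_mem_redLab_inl_iff.mpr hk)
  have hkv : α' (Sum.inr k) + β' (Sum.inl v) ≤ θ v (some k) / 2 :=
    hd _ _ (inl_mem_redLab_inr_iff.mpr hk)
  linarith

end DualFeasible

theorem statement14_general {V K : Type*} [Fintype V] [Fintype K] [DecidableEq V] [DecidableEq K]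
    (Lab : V → Finset (Option K))
    (θ : V → Option K → ℝ)
    (α' β' : (V ⊕ K) → ℝ) (hd : DualFeasible (redCost θ) (redLab Lab) (α', β'))
    (α : V → ℝ) (β : K → ℝ)
    (hα : α = fun v => α' (Sum.inl v) + β' (Sum.inl v))
    (hβ : β = fun k => α' (Sum.inr k) + β' (Sum.inr k)) :
    IlapDualFeasible θ Lab (α, β) := by
  subst hα hβ
  refine ⟨hd.label_add_le_zero, fun v ℓ hℓ => ?_⟩
  cases ℓ with
  | none => simpa using hd.vertex_add_le_dummy v
  | some k => exact hd.vertex_add_label_le hℓ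

/-- Theorem 5(b): the map (21) sends a dual-feasible solution of the reduced LAP `P'`
to a feasible solution of the dual LP formulation of the ILAP `P`. -/
theorem statement14 {V K : Type*} [Fintype V] [Fintype K] [DecidableEq V] [DecidableEq K]
    (Lab : V → Finset (Option K)) (hdum : ∀ v, (none : Option K) ∈ Lab v)
    (θ : V → Option K → ℝ)
    (α' β' : (V ⊕ K) → ℝ) (hd : DualFeasible (redCost θ) (redLab Lab) (α', β'))
    (α : V → ℝ) (β : K → ℝ)
    (hα : α = fun v => α' (Sum.inl v) + β' (Sum.inl v))
    (hβ : β = fun k => α' (Sum.inr k) + β' (Sum.inr k)) :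
    IlapDualFeasible θ Lab (α, β) :=
  statement14_general Lab θ α' β' hd α β hα hβ
end

section
/- Let μ' be optimal for the primal LP of the LAP P'. Define μ by μ_v(ℓ) = (μ'_v(ℓ) + μ'_ℓ(v))/2 for v ∈ V and ℓ ∈ L_v∖{#}, and μ_v(#) = μ'_v(v) for v ∈ V. Then μ is optimal for the primal LP formulation of the ILAP P. -/
open Finset

/-! The LAP `P'` embeds `P`: a fractional assignment of `P` becomes one of `P'` by splitting the
weight of each pair `(v, ℓ)` symmetrically over `(v, ℓ)` and `(ℓ, v)`, with the unused capacity of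
each label placed on its free diagonal entry `(ℓ, ℓ)`. This embedding and the symmetrisation
`μ_v(ℓ) = (μ'_v(ℓ) + μ'_ℓ(v)) / 2` back to `P` both preserve feasibility and the objective, so an
optimum of `P'` symmetrises to an optimum of `P`. -/

section Reduction

variable {V K : Type*} [Fintype V] [Fintype K] [DecidableEq V] [DecidableEq K]
  {Lab : V → Finset (Option K)}

@[simp]
lemma inl_mem_redLab_inl {u v : V} : Sum.inl u ∈ redLab Lab (Sum.inl v) ↔ u = v := by
  simp [redLab]

@[simp]
lemma inr_mem_redLab_inl {k : K} {v : V} :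
    Sum.inr k ∈ redLab Lab (Sum.inl v) ↔ some k ∈ Lab v := by
  simp [redLab]

@[simp]
lemma inl_mem_redLab_inr {v : V} {k : K} :
    Sum.inl v ∈ redLab Lab (Sum.inr k) ↔ some k ∈ Lab v := by
  simp [redLab]

@[simp]
lemma inr_mem_redLab_inr {k' k : K} : Sum.inr k' ∈ redLab Lab (Sum.inr k) ↔ k' = k := by
  simp [redLab]

lemma sum_redLab_inl (v : V) (f : V ⊕ K → ℝ) :
    ∑ x ∈ redLab Lab (Sum.inl v), f x
      = f (Sum.inl v) + ∑ k ∈ univ.filter (fun k => some k ∈ Lab v), f (Sum.inr k) := by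
  rw [redLab, sum_insert (by simp), sum_image (by simp)]

lemma sum_redLab_inr (k : K) (f : V ⊕ K → ℝ) :
    ∑ x ∈ redLab Lab (Sum.inr k), f x
      = f (Sum.inr k) + ∑ v ∈ univ.filter (fun v => some k ∈ Lab v), f (Sum.inl v) := by
  rw [redLab, sum_insert (by simp), sum_image (by simp)]

lemma sum_filter_mem_redLab_inl (v : V) (f : V ⊕ K → ℝ) :
    ∑ w ∈ univ.filter (fun w => Sum.inl v ∈ redLab Lab w), f w
      = f (Sum.inl v) + ∑ k ∈ univ.filter (fun k => some k ∈ Lab v), f (Sum.inr k) := by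
  simp [sum_filter, Fintype.sum_sum_type]

lemma sum_filter_mem_redLab_inr (k : K) (f : V ⊕ K → ℝ) :
    ∑ w ∈ univ.filter (fun w => Sum.inr k ∈ redLab Lab w), f w
      = f (Sum.inr k) + ∑ v ∈ univ.filter (fun v => some k ∈ Lab v), f (Sum.inl v) := by
  simp [sum_filter, Fintype.sum_sum_type, add_comm]

omit [Fintype V] [DecidableEq V] in
lemma sum_of_none_mem {v : V} (hv : (none : Option K) ∈ Lab v) (g : Option K → ℝ) :
    ∑ ℓ ∈ Lab v, g ℓ = g none + ∑ k ∈ univ.filter (fun k => some k ∈ Lab v), g (some k) := by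
  conv_lhs => rw [← filter_univ_mem (Lab v)]
  rw [sum_filter, Fintype.sum_option, if_pos hv, sum_filter]

omit [DecidableEq V] in
lemma sum_sum_filter_comm (f : V → K → ℝ) :
    ∑ v, ∑ k ∈ univ.filter (fun k => some k ∈ Lab v), f v k
      = ∑ k, ∑ v ∈ univ.filter (fun v => some k ∈ Lab v), f v k := by
  simp only [sum_filter]
  exact sum_comm

omit [DecidableEq V] in
lemma ilapPrimalObj_eq (hdum : ∀ v, (none : Option K) ∈ Lab v) (θ : V → Option K → ℝ)
    (μ : V → Option K → ℝ) :
    ilapPrimalObj θ Lab μ = ∑ v, (θ v none * μ v none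
      + ∑ k ∈ univ.filter (fun k => some k ∈ Lab v), θ v (some k) * μ v (some k)) :=
  sum_congr rfl fun v _ => sum_of_none_mem (hdum v) _

lemma primalObj_redCost_redLab (θ : V → Option K → ℝ) (μ' : V ⊕ K → V ⊕ K → ℝ) :
    primalObj (redCost θ) (redLab Lab) μ' = ∑ v, (θ v none * μ' (Sum.inl v) (Sum.inl v)
      + ∑ k ∈ univ.filter (fun k => some k ∈ Lab v),
          θ v (some k) * ((μ' (Sum.inl v) (Sum.inr k) + μ' (Sum.inr k) (Sum.inl v)) / 2)) := by
  simp only [primalObj, Fintype.sum_sum_type, sum_redLab_inl, sum_redLab_inr, redCost, zero_mul,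
    zero_add, ← sum_sum_filter_comm, ← sum_add_distrib, add_assoc]
  refine sum_congr rfl fun v _ => congrArg _ (sum_congr rfl fun k _ => ?_)
  ring

noncomputable def ilapOfRed (μ' : V ⊕ K → V ⊕ K → ℝ) : V → Option K → ℝ := fun v ℓ => match ℓ with
  | some k => (μ' (Sum.inl v) (Sum.inr k) + μ' (Sum.inr k) (Sum.inl v)) / 2
  | none => μ' (Sum.inl v) (Sum.inl v)

variable (Lab) in
def redOfIlap (ν : V → Option K → ℝ) : V ⊕ K → V ⊕ K → ℝ
  | Sum.inl v, Sum.inl u => if u = v then ν v none else 0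
  | Sum.inl v, Sum.inr k => ν v (some k)
  | Sum.inr k, Sum.inl v => ν v (some k)
  | Sum.inr k, Sum.inr k' =>
      if k' = k then 1 - ∑ v ∈ univ.filter (fun v => some k ∈ Lab v), ν v (some k) else 0

lemma ilapPrimalObj_ilapOfRed (hdum : ∀ v, (none : Option K) ∈ Lab v) (θ : V → Option K → ℝ)
    (μ' : V ⊕ K → V ⊕ K → ℝ) :
    ilapPrimalObj θ Lab (ilapOfRed μ') = primalObj (redCost θ) (redLab Lab) μ' := by
  rw [ilapPrimalObj_eq hdum, primalObj_redCost_redLab]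
  rfl

lemma primalObj_redOfIlap (hdum : ∀ v, (none : Option K) ∈ Lab v) (θ : V → Option K → ℝ)
    (ν : V → Option K → ℝ) :
    primalObj (redCost θ) (redLab Lab) (redOfIlap Lab ν) = ilapPrimalObj θ Lab ν := by
  simp [ilapPrimalObj_eq hdum, primalObj_redCost_redLab, redOfIlap]

lemma ilapPrimalFeasible_ilapOfRed (hdum : ∀ v, (none : Option K) ∈ Lab v)
    {μ' : V ⊕ K → V ⊕ K → ℝ} (h : PrimalFeasible (redLab Lab) μ') :
    IlapPrimalFeasible Lab (ilapOfRed μ') := by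
  obtain ⟨hpos, hzero, hrow, hcol⟩ := h
  refine ⟨?_, ?_, fun v => ?_, fun k => ?_⟩
  · rintro v (_ | k) hk
    · exact hpos _ _ (by simp)
    · have := hpos (.inl v) (.inr k) (by simpa)
      have := hpos (.inr k) (.inl v) (by simpa)
      simp only [ilapOfRed]
      positivity
  · rintro v (_ | k) hk
    · exact absurd (hdum v) hk
    · simp [ilapOfRed, hzero (.inl v) (.inr k) (by simpa), hzero (.inr k) (.inl v) (by simpa)]
  · have hr := hrow (.inl v)
    have hc := hcol (.inl v)
    rw [sum_redLab_inl] at hr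
    rw [sum_filter_mem_redLab_inl] at hc
    rw [sum_of_none_mem (hdum v)]
    simp only [ilapOfRed, ← sum_div, sum_add_distrib]
    linarith
  · have hr := hrow (.inr k)
    have hc := hcol (.inr k)
    have hkk := hpos (.inr k) (.inr k) (by simp)
    rw [sum_redLab_inr] at hr
    rw [sum_filter_mem_redLab_inr] at hc
    simp only [ilapOfRed, ← sum_div, sum_add_distrib]
    linarith

lemma primalFeasible_redOfIlap (hdum : ∀ v, (none : Option K) ∈ Lab v)
    {ν : V → Option K → ℝ} (h : IlapPrimalFeasible Lab ν) :
    PrimalFeasible (redLab Lab) (redOfIlap Lab ν) := by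
  obtain ⟨hpos, hzero, hrow, hcol⟩ := h
  have hrow' : ∀ v, ν v none + ∑ k ∈ univ.filter (fun k => some k ∈ Lab v), ν v (some k) = 1 :=
    fun v => sum_of_none_mem (hdum v) _ ▸ hrow v
  refine ⟨?_, ?_, ?_, ?_⟩
  · rintro (v | k) (u | k') hm <;> simp only [inl_mem_redLab_inl, inr_mem_redLab_inl,
      inl_mem_redLab_inr, inr_mem_redLab_inr] at hm
    · simpa [redOfIlap, hm] using hpos v none (hdum v)
    · exact hpos v (some k') hm
    · exact hpos u (some k) hm
    · simpa [redOfIlap, hm] using hcol k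
  · rintro (v | k) (u | k') hm <;> simp only [inl_mem_redLab_inl, inr_mem_redLab_inl,
      inl_mem_redLab_inr, inr_mem_redLab_inr] at hm
    · simp [redOfIlap, hm]
    · exact hzero v (some k') hm
    · exact hzero u (some k) hm
    · simp [redOfIlap, hm]
  · rintro (v | k)
    · simpa [sum_redLab_inl, redOfIlap] using hrow' v
    · simp [sum_redLab_inr, redOfIlap]
  · rintro (v | k)
    · simpa [sum_filter_mem_redLab_inl, redOfIlap] using hrow' v
    · simp [sum_filter_mem_redLab_inr, redOfIlap]

end Reduction

/-- Theorem 5(c): the map (20) sends a primal-optimal solution of the reduced LAP `P'`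
to an optimal solution of the primal LP formulation of the ILAP `P`. -/
theorem statement15 {V K : Type*} [Fintype V] [Fintype K] [DecidableEq V] [DecidableEq K]
    (Lab : V → Finset (Option K)) (hdum : ∀ v, (none : Option K) ∈ Lab v)
    (θ : V → Option K → ℝ)
    (μ' : (V ⊕ K) → (V ⊕ K) → ℝ) (hμ' : μ' ∈ PrimalOpt (redCost θ) (redLab Lab))
    (μ : V → Option K → ℝ)
    (hμ : μ = fun v ℓ => match ℓ with
      | some k => (μ' (Sum.inl v) (Sum.inr k) + μ' (Sum.inr k) (Sum.inl v)) / 2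
      | none => μ' (Sum.inl v) (Sum.inl v)) :
    μ ∈ IlapPrimalOpt θ Lab := by
  obtain ⟨hfeas, hopt⟩ := hμ'
  have hμ : μ = ilapOfRed μ' := hμ
  subst hμ
  refine ⟨ilapPrimalFeasible_ilapOfRed hdum hfeas, fun ν hν => ?_⟩
  rw [ilapPrimalObj_ilapOfRed hdum, ← primalObj_redOfIlap hdum θ ν]
  exact hopt _ (primalFeasible_redOfIlap hdum hν)
end

section
/- Let S be a finite set and a_v, c_v ∈ ℝ for v ∈ S, and define f : ℝ → ℝ by f(t) = Σ_{v∈S} min{a_v − t, c_v} + t. Let b₁ and b₂ be respectively the smallest and the second smallest value among the numbers a_v − c_v for v ∈ S (with b₁ = b₂ in case of ties; with b₂ = 0 if |S| = 1; and with b₁ = b₂ = 0 if S = ∅). Then the set of maximizers of f over the half-line {t ∈ ℝ : t ≤ 0} equals the closed interval [min{b₁, 0}, min{b₂, 0}]. -/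
/-!
Subtracting `Σ c_v` turns `f` into `g(t) = t + Σ_z min (z - t) 0`, the sum running over the
values `z = a_v - c_v` in increasing order `b₁ ≤ b₂ ≤ …`. Splitting off the first term,
`g(t) = min b₁ t + Σ_{z ≥ b₂} min (z - t) 0` for `t ≤ 0` (an empty list behaves like `b₁ = 0`).
Both summands are maximal on `t ≤ 0` exactly when `min b₁ 0 ≤ t` and `t ≤ b₂`, so `g` is bounded
by `min b₁ 0` there and its maximizers are the points where this bound is attained.
-/

theorem setOf_forall_le_eq_setOf_eq {α β : Type*} [PartialOrder β] {g : α → β} {s : Set α}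
    {M : β} (hle : ∀ t ∈ s, g t ≤ M) {t₀ : α} (ht₀ : t₀ ∈ s) (hM : g t₀ = M) :
    {t | t ∈ s ∧ ∀ u ∈ s, g u ≤ g t} = {t | t ∈ s ∧ g t = M} := by
  ext t
  refine and_congr_right fun ht => ⟨fun hmax => (hle t ht).antisymm ?_, fun hgt u hu => ?_⟩
  · exact hM ▸ hmax t₀ ht₀
  · exact hgt ▸ hle u hu

theorem add_eq_iff_of_le_of_nonpos {u v x : ℝ} (hu : u ≤ x) (hv : v ≤ 0) :
    u + v = x ↔ u = x ∧ v = 0 := by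
  grind

noncomputable def hingeSum (l : List ℝ) (t : ℝ) : ℝ := (l.map fun z => min (z - t) 0).sum

@[simp]
theorem hingeSum_nil (t : ℝ) : hingeSum [] t = 0 := rfl

@[simp]
theorem hingeSum_cons (x : ℝ) (l : List ℝ) (t : ℝ) :
    hingeSum (x :: l) t = min (x - t) 0 + hingeSum l t := by
  simp [hingeSum]

theorem hingeSum_nonpos (l : List ℝ) (t : ℝ) : hingeSum l t ≤ 0 := by
  induction l with
  | nil => simp
  | cons x l ih => simpa using add_nonpos (min_le_right (x - t) 0) ih

theorem hingeSum_eq_zero_iff {l : List ℝ} {t : ℝ} : hingeSum l t = 0 ↔ ∀ z ∈ l, t ≤ z := by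
  induction l with
  | nil => simp
  | cons x l ih =>
    have hx : min (x - t) 0 = 0 ↔ t ≤ x := min_eq_right_iff.trans sub_nonneg
    rw [hingeSum_cons, List.forall_mem_cons, ← hx, ← ih,
      add_eq_iff_of_le_of_nonpos (min_le_right _ _) (hingeSum_nonpos l t)]

theorem add_hingeSum_eq_min_add_hingeSum_tail (l : List ℝ) {t : ℝ} (ht : t ≤ 0) :
    t + hingeSum l t = min (l.getD 0 0) t + hingeSum l.tail t := by
  cases l with
  | nil => simp [min_eq_right ht]
  | cons x l =>
    have hx : min (x - t) 0 + t = min x t := by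
      rw [← min_add_add_right, sub_add_cancel, zero_add]
    simp only [hingeSum_cons, List.getD_cons_zero, List.tail_cons, ← hx]
    ring

theorem forall_mem_le_iff_le_min_getD {l : List ℝ} (hl : l.Pairwise (· ≤ ·)) {t : ℝ}
    (ht : t ≤ 0) : (∀ z ∈ l, t ≤ z) ↔ t ≤ min (l.getD 0 0) 0 := by
  cases l with
  | nil => simpa using ht
  | cons x l =>
    rw [List.pairwise_cons] at hl
    simp only [List.forall_mem_cons, List.getD_cons_zero, le_min_iff, ht, and_true]
    exact ⟨And.left, fun hx => ⟨hx, fun z hz => hx.trans (hl.1 z hz)⟩⟩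

theorem min_getD_zero_le_min_getD_one {l : List ℝ} (hl : l.Pairwise (· ≤ ·)) :
    min (l.getD 0 0) 0 ≤ min (l.getD 1 0) 0 := by
  match l, hl with
  | [], _ => simp
  | [x], _ => simp
  | x :: y :: _, hl => exact min_le_min_right 0 (List.rel_of_pairwise_cons hl (by simp))

theorem add_hingeSum_le {l : List ℝ} {t : ℝ} (ht : t ≤ 0) :
    t + hingeSum l t ≤ min (l.getD 0 0) 0 := by
  rw [add_hingeSum_eq_min_add_hingeSum_tail l ht]
  linarith [min_le_min_left (l.getD 0 0) ht, hingeSum_nonpos l.tail t]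

theorem add_hingeSum_eq_iff {l : List ℝ} (hl : l.Pairwise (· ≤ ·)) {t : ℝ} (ht : t ≤ 0) :
    t + hingeSum l t = min (l.getD 0 0) 0 ↔
      min (l.getD 0 0) 0 ≤ t ∧ t ≤ min (l.getD 1 0) 0 := by
  have hmin : min (l.getD 0 0) t = min (l.getD 0 0) 0 ↔ min (l.getD 0 0) 0 ≤ t := by
    grind
  have htail : hingeSum l.tail t = 0 ↔ t ≤ min (l.getD 1 0) 0 := by
    rw [hingeSum_eq_zero_iff, forall_mem_le_iff_le_min_getD hl.tail ht]
    cases l <;> simp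
  rw [add_hingeSum_eq_min_add_hingeSum_tail l ht, ← hmin, ← htail]
  exact add_eq_iff_of_le_of_nonpos (min_le_min_left _ ht) (hingeSum_nonpos _ _)

theorem maximizers_add_hingeSum_eq_Icc {l : List ℝ} (hl : l.Pairwise (· ≤ ·)) :
    {t : ℝ | t ≤ 0 ∧ ∀ s : ℝ, s ≤ 0 → s + hingeSum l s ≤ t + hingeSum l t} =
      Set.Icc (min (l.getD 0 0) 0) (min (l.getD 1 0) 0) := by
  have hb₁ : min (l.getD 0 0) 0 ≤ 0 := min_le_right _ _
  have hmax := setOf_forall_le_eq_setOf_eq (g := fun t => t + hingeSum l t) (s := Set.Iic 0)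
    (fun t ht => add_hingeSum_le ht) (Set.mem_Iic.2 hb₁)
    ((add_hingeSum_eq_iff hl hb₁).2 ⟨le_rfl, min_getD_zero_le_min_getD_one hl⟩)
  refine hmax.trans (Set.ext fun t => ?_)
  simp only [Set.mem_ofPred_eq, Set.mem_Iic, Set.mem_Icc]
  constructor
  · exact fun ⟨ht, h⟩ => (add_hingeSum_eq_iff hl ht).1 h
  · intro h
    have ht : t ≤ 0 := h.2.trans (min_le_right _ _)
    exact ⟨ht, (add_hingeSum_eq_iff hl ht).2 h⟩

/-- The set of maximizers of `f(t) = Σ_{v∈S} min{a_v − t, c_v} + t` over `{t ≤ 0}` is the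
interval `[min{b₁, 0}, min{b₂, 0}]`, where `b₁` and `b₂` are the smallest and second
smallest among the values `a_v − c_v` (with `b₁ = b₂` in case of ties, `b₂ = 0` if `|S| = 1`,
and `b₁ = b₂ = 0` if `S = ∅`): here `l` is the sorted list of the values `a_v − c_v`, so
`b₁` and `b₂` are its first two entries, with default value `0` when they do not exist. -/
theorem statement19 {ι : Type*} [Fintype ι] (a c : ι → ℝ)
    (f : ℝ → ℝ) (hf : f = fun t => (∑ v : ι, min (a v - t) (c v)) + t)
    (l : List ℝ)
    (hl : l = Multiset.sort ((Finset.univ.val : Multiset ι).map fun v => a v - c v) (· ≤ ·))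
    (b₁ b₂ : ℝ) (hb₁ : b₁ = l.getD 0 0) (hb₂ : b₂ = l.getD 1 0) :
    {t : ℝ | t ≤ 0 ∧ ∀ s : ℝ, s ≤ 0 → f s ≤ f t} = Set.Icc (min b₁ 0) (min b₂ 0) := by
  have hsorted : l.Pairwise (· ≤ ·) := hl ▸ Multiset.pairwise_sort _ _
  have hhinge (t : ℝ) : hingeSum l t = ∑ v, min (a v - c v - t) 0 := by
    rw [hingeSum, ← Multiset.sum_coe, ← Multiset.map_coe, hl, Multiset.sort_eq, Multiset.map_map]
    rfl
  have hf_eq (t : ℝ) : f t = ∑ v, c v + (t + hingeSum l t) := by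
    have hterm (v : ι) : min (a v - t) (c v) = min (a v - c v - t) 0 + c v := by
      rw [← min_add_add_right]
      ring_nf
    simp only [hf, hhinge, Finset.sum_congr rfl fun v _ => hterm v, Finset.sum_add_distrib]
    ring
  simp only [hf_eq, add_le_add_iff_left]
  rw [hb₁, hb₂]
  exact maximizers_add_hingeSum_eq_Icc hsorted
end
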